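/- Apply the dqd transform (shift 0) to a positive n×n upper bidiagonal matrix B with intermediate values d_1,…,d_n, and let d_min = min_k d_k and σ = σ_min(B) the smallest singular value of B. Then (1/n)·d_min ≤ σ² ≤ d_min ≤ n·σ². -/

import Mathlib

/-!
With `Y = B⁻¹`, the dqd recursion is exactly the recursion for the squared column norms
of `Y`: `1 / d_k = ‖Y e_k‖² = ((B Bᵀ)⁻¹)_kk`. For `σ² = λ_min(B Bᵀ)` one has
`σ² · ((B Bᵀ)⁻¹)_kk ≤ 1` (Rayleigh quotient at `(B Bᵀ)⁻¹ e_k`) and `1 ≤ σ² · tr (B Bᵀ)⁻¹`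
(Cauchy–Schwarz on a unit eigenvector for `σ²`). With `tr (B Bᵀ)⁻¹ = ∑ 1 / d_k ≤ n / d_min`
this gives `σ² ≤ d_min ≤ n σ²`.
-/

open Matrix

/-- The `n×n` upper bidiagonal matrix with diagonal `a` and superdiagonal `b`. -/
def upperBidiagonal (n : ℕ) (a b : ℕ → ℝ) : Matrix (Fin n) (Fin n) ℝ :=
  Matrix.of fun i j => if (j : ℕ) = (i : ℕ) then a i
    else if (j : ℕ) = (i : ℕ) + 1 then b i else 0

namespace Matrix

variable {n : Type*} [Fintype n] [DecidableEq n]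

theorem IsHermitian.iInf_eigenvalues_mul_dotProduct_self_le {M : Matrix n n ℝ}
    (hM : M.IsHermitian) (x : n → ℝ) :
    (⨅ i, hM.eigenvalues i) * (x ⬝ᵥ x) ≤ x ⬝ᵥ (M *ᵥ x) := by
  set μ := ⨅ i, hM.eigenvalues i
  set U : Matrix n n ℝ := (hM.eigenvectorUnitary : Matrix n n ℝ)
  have hUU : U * Uᴴ = 1 := mem_unitaryGroup_iff.mp hM.eigenvectorUnitary.2
  have hshift : M - μ • 1 = U * diagonal (fun i => hM.eigenvalues i - μ) * Uᴴ := by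
    have hspec : M = U * diagonal hM.eigenvalues * Uᴴ := hM.spectral_theorem
    rw [← diagonal_sub, ← smul_one_eq_diagonal, mul_sub, sub_mul, ← hspec, mul_smul_comm,
      mul_one, smul_mul_assoc, hUU]
  have hpsd : (M - μ • 1).PosSemidef := hshift ▸
    (PosSemidef.diagonal fun i => sub_nonneg.2 <|
      ciInf_le (Set.finite_range _).bddBelow i).mul_mul_conjTranspose_same U
  have := hpsd.dotProduct_mulVec_nonneg x
  simp only [star_trivial, sub_mulVec, smul_mulVec, one_mulVec, dotProduct_sub,
    dotProduct_smul, smul_eq_mul] at this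
  linarith

theorem IsHermitian.exists_mulVec_eq_iInf_eigenvalues_smul [Nonempty n] {M : Matrix n n ℝ}
    (hM : M.IsHermitian) :
    ∃ u : n → ℝ, u ⬝ᵥ u = 1 ∧ M *ᵥ u = (⨅ i, hM.eigenvalues i) • u := by
  obtain ⟨i, hi⟩ := exists_eq_ciInf_of_finite (f := hM.eigenvalues)
  refine ⟨hM.eigenvectorBasis i, ?_, hi ▸ hM.mulVec_eigenvectorBasis i⟩
  have h := real_inner_self_eq_norm_sq (hM.eigenvectorBasis i)
  rwa [EuclideanSpace.inner_eq_star_dotProduct, star_trivial, hM.eigenvectorBasis.orthonormal.1 i,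
    one_pow] at h

theorem iInf_eigenvalues_nonneg {m : Type*} [Fintype m] {B : Matrix n m ℝ}
    (hM : (B * Bᵀ).IsHermitian) : 0 ≤ ⨅ i, hM.eigenvalues i := by
  have hpsd := posSemidef_self_mul_conjTranspose B
  rw [conjTranspose_eq_transpose_of_trivial] at hpsd
  exact Real.iInf_nonneg hpsd.eigenvalues_nonneg

variable {B Y : Matrix n n ℝ}

theorem iInf_eigenvalues_mul_transpose_mul_self_apply_le_one (hBY : B * Y = 1)
    (hM : (B * Bᵀ).IsHermitian) (k : n) :
    (⨅ i, hM.eigenvalues i) * (Yᵀ * Y) k k ≤ 1 := by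
  set μ := ⨅ i, hM.eigenvalues i
  set s := (Yᵀ * Y) k k
  -- `v = (B Bᵀ)⁻¹ e_k` has `v ⬝ᵥ B Bᵀ v = v k = s`, while `v ⬝ᵥ v ≥ (v k)²`.
  set v := Yᵀ *ᵥ Y.col k
  have hBv : Bᵀ *ᵥ v = Y.col k := by
    rw [mulVec_mulVec, ← transpose_mul, mul_eq_one_comm.1 hBY, transpose_one, one_mulVec]
  have hquad : v ⬝ᵥ ((B * Bᵀ) *ᵥ v) = s := by
    rw [← mulVec_mulVec, dotProduct_mulVec, ← mulVec_transpose, hBv]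
    rfl
  have hvk : s ^ 2 ≤ v ⬝ᵥ v := by
    rw [sq]
    exact Finset.single_le_sum (f := fun j => v j * v j) (fun j _ => mul_self_nonneg _)
      (Finset.mem_univ k)
  have hμs : μ * s ^ 2 ≤ s := (mul_le_mul_of_nonneg_left hvk (iInf_eigenvalues_nonneg hM)).trans
    (hquad ▸ hM.iInf_eigenvalues_mul_dotProduct_self_le v)
  have hs : 0 ≤ s := Finset.sum_nonneg fun j _ => mul_self_nonneg (Y j k)
  rcases hs.eq_or_lt with hs | hs
  · rw [← hs, mul_zero]
    exact zero_le_one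
  · exact le_of_mul_le_mul_right (by rwa [one_mul, mul_assoc, ← sq]) hs

theorem one_le_iInf_eigenvalues_mul_trace_transpose_mul_self [Nonempty n] (hBY : B * Y = 1)
    (hM : (B * Bᵀ).IsHermitian) :
    1 ≤ (⨅ i, hM.eigenvalues i) * (Yᵀ * Y).trace := by
  set μ := ⨅ i, hM.eigenvalues i
  obtain ⟨u, hu, hMu⟩ := hM.exists_mulVec_eq_iInf_eigenvalues_smul
  set z := Bᵀ *ᵥ u
  have hzz : z ⬝ᵥ z = μ := by
    have hquad : u ⬝ᵥ ((B * Bᵀ) *ᵥ u) = z ⬝ᵥ z := by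
      rw [← mulVec_mulVec, dotProduct_mulVec, ← mulVec_transpose]
    rw [← hquad, hMu, dotProduct_smul, hu, smul_eq_mul, mul_one]
  -- each `u i = (Y.col i) ⬝ᵥ z`, so Cauchy–Schwarz bounds `(u i)²` by `(Yᵀ Y) i i * μ`
  have hu_eq : u = Yᵀ *ᵥ z := by
    rw [mulVec_mulVec, ← transpose_mul, hBY, transpose_one, one_mulVec]
  have hCS : ∀ i, u i ^ 2 ≤ (Yᵀ * Y) i i * μ := fun i => by
    have h := Finset.sum_mul_sq_le_sq_mul_sq Finset.univ (Y.col i) z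
    simp only [sq] at h ⊢
    rw [hu_eq, ← hzz]
    exact h
  calc 1 = ∑ i, u i ^ 2 := by simp only [← hu, dotProduct, sq]
    _ ≤ ∑ i, (Yᵀ * Y) i i * μ := Finset.sum_le_sum fun i _ => hCS i
    _ = μ * (Yᵀ * Y).trace := by
      rw [trace, Finset.mul_sum]
      exact Finset.sum_congr rfl fun i _ => mul_comm _ _

end Matrix

theorem upperBidiagonal_mulVec_apply {n : ℕ} (a b w : ℕ → ℝ) (hw : w n = 0) (i : Fin n) :
    (upperBidiagonal n a b *ᵥ fun j => w j) i = a i * w i + b i * w (i + 1) := by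
  have hsplit : ∀ j : ℕ, (if j = i then a i else if j = i + 1 then b i else 0) * w j =
      (if j = i then a i * w j else 0) + (if j = i + 1 then b i * w j else 0) := fun j => by
    split_ifs <;> simp_all
  change ∑ j : Fin n, _ = _
  simp only [upperBidiagonal, of_apply]
  rw [Fin.sum_univ_eq_sum_range
      (fun j => (if j = i then a i else if j = i + 1 then b i else 0) * w j),
    Finset.sum_congr rfl fun j _ => hsplit j, Finset.sum_add_distrib, Finset.sum_ite_eq',
    Finset.sum_ite_eq', if_pos (Finset.mem_range.2 i.isLt)]
  by_cases hi : (i : ℕ) + 1 < n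
  · rw [if_pos (Finset.mem_range.2 hi)]
  · rw [if_neg (by simpa using hi), show (i : ℕ) + 1 = n by omega, hw, mul_zero]

/-- Entry `(i, k)` of the inverse of `upperBidiagonal n a b`, from back substitution in
`B y = e_k`. -/
noncomputable def upperBidiagonalInvEntry (a b : ℕ → ℝ) (i k : ℕ) : ℝ :=
  if i ≤ k then (∏ j ∈ Finset.Ico i k, (-b j / a j)) / a k else 0

namespace upperBidiagonalInvEntry

variable (a b : ℕ → ℝ) {i k : ℕ}

theorem self : upperBidiagonalInvEntry a b k k = 1 / a k := by
  simp [upperBidiagonalInvEntry]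

theorem of_lt (h : k < i) : upperBidiagonalInvEntry a b i k = 0 := by
  simp [upperBidiagonalInvEntry, Nat.not_le.2 h]

theorem eq_mul_succ (h : i < k) :
    upperBidiagonalInvEntry a b i k = -b i / a i * upperBidiagonalInvEntry a b (i + 1) k := by
  rw [upperBidiagonalInvEntry, upperBidiagonalInvEntry, if_pos h.le,
    if_pos (show i + 1 ≤ k from h), Finset.prod_eq_prod_Ico_succ_bot h, mul_div_assoc]

theorem succ_eq_mul (h : i ≤ k) (hak : a k ≠ 0) :
    upperBidiagonalInvEntry a b i (k + 1) = -b k / a (k + 1) * upperBidiagonalInvEntry a b i k := by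
  rw [upperBidiagonalInvEntry, upperBidiagonalInvEntry, if_pos (by omega), if_pos h,
    Finset.prod_Ico_succ_top h]
  field_simp

end upperBidiagonalInvEntry

noncomputable def upperBidiagonalInv (n : ℕ) (a b : ℕ → ℝ) : Matrix (Fin n) (Fin n) ℝ :=
  Matrix.of fun i k => upperBidiagonalInvEntry a b i k

theorem upperBidiagonal_mul_upperBidiagonalInv {n : ℕ} {a : ℕ → ℝ} (b : ℕ → ℝ)
    (ha : ∀ k < n, a k ≠ 0) : upperBidiagonal n a b * upperBidiagonalInv n a b = 1 := by
  ext i k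
  rw [one_apply]
  change (upperBidiagonal n a b *ᵥ fun j => upperBidiagonalInvEntry a b j k) i = _
  rw [upperBidiagonal_mulVec_apply a b (upperBidiagonalInvEntry a b · k)
    (upperBidiagonalInvEntry.of_lt a b k.isLt)]
  have hai := ha i i.isLt
  rcases lt_trichotomy (i : ℕ) k with h | h | h
  · rw [if_neg (Fin.ne_of_lt h), upperBidiagonalInvEntry.eq_mul_succ a b h]
    field_simp
    ring
  · rw [if_pos (Fin.ext h), h, upperBidiagonalInvEntry.self,
      upperBidiagonalInvEntry.of_lt a b (by omega), mul_zero, add_zero,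
      mul_one_div_cancel (h ▸ hai)]
  · rw [if_neg (Fin.ne_of_gt h), upperBidiagonalInvEntry.of_lt a b h,
      upperBidiagonalInvEntry.of_lt a b (by omega)]
    ring

section dqd

variable {n : ℕ} {a b d : ℕ → ℝ}

theorem dqd_pos (ha : ∀ k < n, a k ≠ 0) (hd1 : d 0 = a 0 ^ 2)
    (hdk : ∀ k, k + 1 < n → d (k + 1) = d k * a (k + 1) ^ 2 / (d k + b k ^ 2)) :
    ∀ k < n, 0 < d k := by
  intro k hk
  induction k with
  | zero => rw [hd1]; have := ha 0 hk; positivity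
  | succ k ih =>
    have hdk_pos := ih (by omega)
    rw [hdk k hk]
    have := ha _ hk
    positivity

theorem sum_sq_upperBidiagonalInvEntry (ha : ∀ k < n, a k ≠ 0) (hd1 : d 0 = a 0 ^ 2)
    (hdk : ∀ k, k + 1 < n → d (k + 1) = d k * a (k + 1) ^ 2 / (d k + b k ^ 2)) :
    ∀ k < n, ∑ i ∈ Finset.range (k + 1), upperBidiagonalInvEntry a b i k ^ 2 = 1 / d k := by
  intro k hk
  induction k with
  | zero => simp [upperBidiagonalInvEntry.self, hd1]
  | succ k ih =>
    have hd_pos := dqd_pos ha hd1 hdk k (by omega)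
    have hak := ha k (by omega)
    have hak1 := ha (k + 1) hk
    rw [Finset.sum_range_succ, upperBidiagonalInvEntry.self,
      Finset.sum_congr rfl fun i hi => by
        rw [upperBidiagonalInvEntry.succ_eq_mul a b (Finset.mem_range_succ_iff.1 hi) hak, mul_pow],
      ← Finset.mul_sum, ih (by omega), hdk k hk]
    field_simp
    ring

theorem transpose_mul_self_upperBidiagonalInv_apply_self (ha : ∀ k < n, a k ≠ 0)
    (hd1 : d 0 = a 0 ^ 2)
    (hdk : ∀ k, k + 1 < n → d (k + 1) = d k * a (k + 1) ^ 2 / (d k + b k ^ 2)) (k : Fin n) :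
    ((upperBidiagonalInv n a b)ᵀ * upperBidiagonalInv n a b) k k = 1 / d k := by
  rw [← sum_sq_upperBidiagonalInvEntry ha hd1 hdk k k.isLt, mul_apply]
  simp only [transpose_apply, upperBidiagonalInv, of_apply, ← sq]
  rw [Fin.sum_univ_eq_sum_range (fun i => upperBidiagonalInvEntry a b i k ^ 2)]
  refine (Finset.sum_subset (Finset.range_subset_range.2 k.isLt) fun i _ hi => ?_).symm
  rw [upperBidiagonalInvEntry.of_lt a b (by simpa using hi), sq, mul_zero]

end dqd

theorem dqd_dmin_bounds_general (n : ℕ) (hn : 0 < n) (a b d : ℕ → ℝ)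
    (ha : ∀ k < n, 0 < a k)
    (hd1 : d 0 = (a 0) ^ 2)
    (hdk : ∀ k, k + 1 < n → d (k + 1) = d k * (a (k + 1)) ^ 2 / (d k + (b k) ^ 2))
    (hM : (upperBidiagonal n a b * (upperBidiagonal n a b)ᵀ).IsHermitian) :
    (1 / (n : ℝ)) * (⨅ k : Fin n, d (k : ℕ)) ≤ (⨅ i, hM.eigenvalues i) ∧
      (⨅ i, hM.eigenvalues i) ≤ (⨅ k : Fin n, d (k : ℕ)) ∧
      (⨅ k : Fin n, d (k : ℕ)) ≤ (n : ℝ) * ⨅ i, hM.eigenvalues i := by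
  have : Nonempty (Fin n) := ⟨⟨0, hn⟩⟩
  have ha' : ∀ k < n, a k ≠ 0 := fun k hk => (ha k hk).ne'
  have hBY := upperBidiagonal_mul_upperBidiagonalInv b ha'
  have hdiag := transpose_mul_self_upperBidiagonalInv_apply_self ha' hd1 hdk
  have hσsq := iInf_eigenvalues_nonneg hM
  obtain ⟨k₀, hk₀⟩ := exists_eq_ciInf_of_finite (f := fun k : Fin n => d k)
  set σsq := ⨅ i, hM.eigenvalues i
  set dmin := ⨅ k : Fin n, d k
  have hdmin_pos : 0 < dmin := hk₀ ▸ dqd_pos ha' hd1 hdk k₀ k₀.isLt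
  have hupper : σsq ≤ dmin := by
    have := iInf_eigenvalues_mul_transpose_mul_self_apply_le_one hBY hM k₀
    rwa [hdiag, hk₀, mul_one_div, div_le_one hdmin_pos] at this
  have htrace : ((upperBidiagonalInv n a b)ᵀ * upperBidiagonalInv n a b).trace ≤ n / dmin := by
    refine (Finset.sum_le_card_nsmul _ _ (1 / dmin) fun k _ => ?_).trans_eq
      (by simp [div_eq_mul_inv])
    rw [diag_apply, hdiag]
    exact one_div_le_one_div_of_le hdmin_pos (ciInf_le (Set.finite_range _).bddBelow k)
  have hlower : dmin ≤ n * σsq := by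
    have := (one_le_iInf_eigenvalues_mul_trace_transpose_mul_self hBY hM).trans
      (mul_le_mul_of_nonneg_left htrace hσsq)
    rwa [mul_div_assoc', le_div_iff₀ hdmin_pos, one_mul, mul_comm] at this
  refine ⟨?_, hupper, hlower⟩
  rw [one_div_mul_eq_div, div_le_iff₀ (by positivity)]
  linarith

/-- `(1/n)·d_min ≤ σ_min(B)² ≤ d_min ≤ n·σ_min(B)²` where `σ_min(B)²` is the
smallest eigenvalue of `B*Bᵀ` and `d_min = min_k d_k`. -/
theorem dqd_dmin_bounds (n : ℕ) (hn : 0 < n) (a b d : ℕ → ℝ)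
    (ha : ∀ k < n, 0 < a k) (hb : ∀ k, k + 1 < n → 0 < b k)
    (hd1 : d 0 = (a 0) ^ 2)
    (hdk : ∀ k, k + 1 < n → d (k + 1) = d k * (a (k + 1)) ^ 2 / (d k + (b k) ^ 2))
    (hM : (upperBidiagonal n a b * (upperBidiagonal n a b)ᵀ).IsHermitian) :
    (1 / (n : ℝ)) * (⨅ k : Fin n, d (k : ℕ)) ≤ (⨅ i, hM.eigenvalues i) ∧
      (⨅ i, hM.eigenvalues i) ≤ (⨅ k : Fin n, d (k : ℕ)) ∧
      (⨅ k : Fin n, d (k : ℕ)) ≤ (n : ℝ) * ⨅ i, hM.eigenvalues i :=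
  dqd_dmin_bounds_general n hn a b d ha hd1 hdk hM
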